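/- If u ≠ 0, then rank((A_c^TV − u·I)²) = 1 and rank((A_c^TV − u·I)³) = 1; in particular rank((A_c^TV − u·I)²) = rank((A_c^TV − u·I)³), so the Jordan form of A_c^TV contains a single Jordan block of order 2 for the eigenvalue u. -/
import Mathlib


/-- The Toro–Vázquez convection flux Jacobian of the 1-D Euler system. -/
noncomputable def AcTV (u : ℝ) : Matrix (Fin 3) (Fin 3) ℝ :=
  !![0, 1, 0;
     -u^2, 2*u, 0;
     -u^3, (3/2)*u^2, 0]

lemma rank_vecMulVec_eq_one {w v : Fin 3 → ℝ} (h : Matrix.vecMulVec w v ≠ 0) :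
    (Matrix.vecMulVec w v).rank = 1 := by
  have hle : (Matrix.vecMulVec w v).rank ≤ 1 := by
    rw [Matrix.vecMulVec_eq (Fin 1)]
    calc (Matrix.replicateCol (Fin 1) w * Matrix.replicateRow (Fin 1) v).rank
        ≤ (Matrix.replicateCol (Fin 1) w).rank := Matrix.rank_mul_le_left _ _
      _ ≤ 1 := by simpa using Matrix.rank_le_card_width (Matrix.replicateCol (Fin 1) w)
  have hpos : 0 < (Matrix.vecMulVec w v).rank := by
    by_contra hc
    push_neg at hc
    interval_cases h' : (Matrix.vecMulVec w v).rank
    · apply h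
      have : LinearMap.range (Matrix.vecMulVec w v).mulVecLin = ⊥ :=
        Submodule.finrank_eq_zero.mp h'
      ext i j
      have := LinearMap.range_eq_bot.mp this
      have h2 := congrFun (LinearMap.congr_fun this (Pi.single j 1)) i
      simpa [Matrix.mulVecLin, Matrix.mulVec_single] using h2
  omega

/-- For `u ≠ 0`, `rank((A_c^TV − u·I)²) = 1 = rank((A_c^TV − u·I)³)`, so the Jordan form
of `A_c^TV` contains a single Jordan block of order 2 for the eigenvalue `u`. -/
theorem rank_powers_AcTV (u : ℝ) (hu : u ≠ 0) :
    ((AcTV u - u • (1 : Matrix (Fin 3) (Fin 3) ℝ))^2).rank = 1 ∧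
    ((AcTV u - u • (1 : Matrix (Fin 3) (Fin 3) ℝ))^3).rank = 1 := by
  have h2 : (AcTV u - u • (1 : Matrix (Fin 3) (Fin 3) ℝ))^2
      = Matrix.vecMulVec ![0, 0, u^2] ![u^2/2, -u, 1] := by
    rw [pow_two]
    ext i j
    simp [AcTV, Matrix.vecMulVec, Matrix.mul_apply, Fin.sum_univ_three,
      Matrix.one_apply]
    fin_cases i <;> fin_cases j <;> simp <;> ring
  have h3 : (AcTV u - u • (1 : Matrix (Fin 3) (Fin 3) ℝ))^3
      = Matrix.vecMulVec ![0, 0, -u^3] ![u^2/2, -u, 1] := by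
    rw [pow_succ, h2]
    ext i j
    simp [AcTV, Matrix.vecMulVec, Matrix.mul_apply, Fin.sum_univ_three,
      Matrix.one_apply]
    fin_cases i <;> fin_cases j <;> simp <;> ring
  constructor
  · rw [h2]
    apply rank_vecMulVec_eq_one
    intro h
    have := congrFun (congrFun h 2) 2
    simp [Matrix.vecMulVec] at this
    exact hu this
  · rw [h3]
    apply rank_vecMulVec_eq_one
    intro h
    have := congrFun (congrFun h 2) 2
    simp [Matrix.vecMulVec] at this
    exact hu this
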